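/- Let a1 ≤ a2 and b1 ≤ b2 be nonnegative reals and tij = ai + bj. Then ∫_0^t c(τ)dτ ≥ 0 for all t ≥ 0 and ∫_t^u c(τ)dτ ≤ 0 for all 0 ≤ t and all u ≥ t22, where c(t) = h(t−t11) − h(t−t12) − h(t−t21) + h(t−t22). Moreover ∫_0^u c(τ)dτ = 0 for u ≥ t22. -/

import Mathlib

/-!
The ramp `τ ↦ (τ - s)⁺` is a primitive of `τ ↦ h(τ - s)`, so `∫_x^y c = R y - R x` where
`R` is the mixed second difference of the ramps `(τ - aᵢ - bⱼ)⁺`. This `R` vanishes before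
`t₁₁` and, because `-t₁₁ + t₁₂ + t₂₁ - t₂₂ = 0`, also after `t₂₂`; in between it is a
nonnegative trapezoid. With `t₁₁ ≥ 0` this gives all three claims.
-/

noncomputable def heaviside (x : ℝ) : ℝ := if 0 ≤ x then 1 else 0

open intervalIntegral Set

lemma heaviside_monotone : Monotone heaviside := by
  intro x y hxy
  unfold heaviside
  split_ifs <;> linarith

lemma hasDerivWithinAt_posPart_Ioi (x : ℝ) :
    HasDerivWithinAt (fun y : ℝ => y⁺) (heaviside x) (Ioi x) x := by
  rcases le_or_gt 0 x with hx | hx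
  · rw [heaviside, if_pos hx]
    exact (hasDerivWithinAt_id x _).congr (fun y hy => posPart_eq_self.2 (hx.trans hy.le))
      (posPart_eq_self.2 hx)
  · rw [heaviside, if_neg hx.not_ge]
    exact ((hasDerivAt_const x (0 : ℝ)).congr_of_eventuallyEq
      ((eventually_lt_nhds hx).mono fun y hy => posPart_eq_zero.2 hy.le)).hasDerivWithinAt

lemma integral_heaviside (x y : ℝ) : ∫ τ in x..y, heaviside τ = y⁺ - x⁺ :=
  integral_eq_sub_of_hasDeriv_right continuous_posPart.continuousOn
    (fun τ _ => hasDerivWithinAt_posPart_Ioi τ) heaviside_monotone.intervalIntegrable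

lemma integral_heaviside_sub (s x y : ℝ) :
    ∫ τ in x..y, heaviside (τ - s) = (y - s)⁺ - (x - s)⁺ := by
  rw [integral_comp_sub_right, integral_heaviside]

lemma intervalIntegrable_heaviside_sub (s x y : ℝ) :
    IntervalIntegrable (fun τ => heaviside (τ - s)) MeasureTheory.volume x y :=
  (heaviside_monotone.comp fun _ _ h => sub_le_sub_right h s).intervalIntegrable

def rampMixedDiff (a1 a2 b1 b2 τ : ℝ) : ℝ :=
  (τ - (a1 + b1))⁺ - (τ - (a1 + b2))⁺ - (τ - (a2 + b1))⁺ + (τ - (a2 + b2))⁺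

section rampMixedDiff

variable {a1 a2 b1 b2 : ℝ}

lemma integral_eq_rampMixedDiff_sub {c : ℝ → ℝ}
    (hc : ∀ t, c t = heaviside (t - (a1 + b1)) - heaviside (t - (a1 + b2))
        - heaviside (t - (a2 + b1)) + heaviside (t - (a2 + b2))) (x y : ℝ) :
    ∫ τ in x..y, c τ = rampMixedDiff a1 a2 b1 b2 y - rampMixedDiff a1 a2 b1 b2 x := by
  have hint (s : ℝ) := intervalIntegrable_heaviside_sub s x y
  rw [funext hc, integral_add ((hint _).sub (hint _) |>.sub (hint _)) (hint _),
    integral_sub ((hint _).sub (hint _)) (hint _), integral_sub (hint _) (hint _)]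
  simp only [integral_heaviside_sub, rampMixedDiff]
  ring

variable (ha : a1 ≤ a2) (hb : b1 ≤ b2)
include ha hb

lemma rampMixedDiff_nonneg (τ : ℝ) : 0 ≤ rampMixedDiff a1 a2 b1 b2 τ := by
  simp only [rampMixedDiff, posPart_def, max_def]
  split_ifs <;> linarith

lemma rampMixedDiff_eq_zero_of_le {τ : ℝ} (hτ : τ ≤ a1 + b1) :
    rampMixedDiff a1 a2 b1 b2 τ = 0 := by
  have hramp (s : ℝ) (hs : a1 + b1 ≤ s) : (τ - s)⁺ = 0 := posPart_eq_zero.2 (by linarith)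
  rw [rampMixedDiff, hramp _ le_rfl, hramp _ (by linarith), hramp _ (by linarith),
    hramp _ (by linarith)]
  norm_num

lemma rampMixedDiff_eq_zero_of_ge {τ : ℝ} (hτ : a2 + b2 ≤ τ) :
    rampMixedDiff a1 a2 b1 b2 τ = 0 := by
  have hramp (s : ℝ) (hs : s ≤ a2 + b2) : (τ - s)⁺ = τ - s :=
    posPart_eq_self.2 (by linarith)
  rw [rampMixedDiff, hramp _ (by linarith), hramp _ (by linarith), hramp _ (by linarith),
    hramp _ le_rfl]
  ring

end rampMixedDiff

theorem stmt8 (a1 a2 b1 b2 : ℝ) (ha0 : 0 ≤ a1) (hb0 : 0 ≤ b1)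
    (ha : a1 ≤ a2) (hb : b1 ≤ b2)
    (c : ℝ → ℝ)
    (hc : ∀ t, c t = heaviside (t - (a1 + b1)) - heaviside (t - (a1 + b2))
        - heaviside (t - (a2 + b1)) + heaviside (t - (a2 + b2))) :
    (∀ t, 0 ≤ t → 0 ≤ ∫ τ in (0:ℝ)..t, c τ) ∧
    (∀ t, 0 ≤ t → ∀ u, a2 + b2 ≤ u → (∫ τ in t..u, c τ) ≤ 0) ∧
    (∀ u, a2 + b2 ≤ u → (∫ τ in (0:ℝ)..u, c τ) = 0) := by
  have hR0 : rampMixedDiff a1 a2 b1 b2 0 = 0 := rampMixedDiff_eq_zero_of_le ha hb (by linarith)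
  simp only [integral_eq_rampMixedDiff_sub hc, hR0, sub_zero]
  refine ⟨fun t _ => rampMixedDiff_nonneg ha hb t, fun t _ u hu => ?_,
    fun u hu => rampMixedDiff_eq_zero_of_ge ha hb hu⟩
  rw [rampMixedDiff_eq_zero_of_ge ha hb hu, zero_sub, neg_nonpos]
  exact rampMixedDiff_nonneg ha hb t
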